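/- Let ρ0, ρ1 be density matrices on ℂ^D and set F = tr √(ρ1^{1/2} ρ0 ρ1^{1/2}). Then for all D×D complex matrices W0, W1 satisfying W0 W0† = ρ0 and W1 W1† = ρ1, one has Re tr((W0 − W1)(W0 − W1)†) ≥ 2 − 2F, and there exist such W0, W1 achieving equality. Hence the squared Bures distance d_B²(ρ0, ρ1) = 2 − 2F(ρ0, ρ1) equals the minimum of tr((W0 − W1)(W0 − W1)†) over all such W0, W1. -/

import Mathlib

open Matrix
open scoped ComplexOrder

namespace Matrix.PosSemidef

/-- The square root of a positive semidefinite matrix (Mathlib's former `Matrix.PosSemidef.sqrt`). -/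
noncomputable def sqrt {𝕜 : Type*} [RCLike 𝕜] {n : Type*} [Fintype n] [DecidableEq n]
    {A : Matrix n n 𝕜} (hA : PosSemidef A) : Matrix n n 𝕜 :=
  hA.1.eigenvectorUnitary.1 * diagonal ((↑) ∘ (√·) ∘ hA.1.eigenvalues) *
  (star hA.1.eigenvectorUnitary : Matrix n n 𝕜)

lemma posSemidef_sqrt {𝕜 : Type*} [RCLike 𝕜] {n : Type*} [Fintype n] [DecidableEq n]
    {A : Matrix n n 𝕜} (hA : PosSemidef A) : PosSemidef hA.sqrt := by
  apply PosSemidef.mul_mul_conjTranspose_same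
  refine posSemidef_diagonal_iff.mpr fun i ↦ ?_
  rw [Function.comp_apply, RCLike.nonneg_iff]
  constructor
  · simp only [RCLike.ofReal_re]; exact Real.sqrt_nonneg _
  · simp only [RCLike.ofReal_im]

end Matrix.PosSemidef

open scoped MatrixOrder in
lemma Matrix.PosSemidef.sqrt_eq_cfc {n : Type*} [Fintype n] [DecidableEq n]
    {A : Matrix n n ℂ} (hA : A.PosSemidef) : hA.sqrt = CFC.sqrt A := by
  rw [CFC.sqrt_eq_cfc, cfc_nnreal_eq_real _ A, hA.1.cfc_eq, IsHermitian.cfc, Unitary.conjStarAlgAut_apply]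
  unfold Matrix.PosSemidef.sqrt
  congr 3
  funext i
  simp [max_eq_left (hA.eigenvalues_nonneg i)]

open scoped MatrixOrder in
lemma Matrix.PosSemidef.sqrt_mul_self {n : Type*} [Fintype n] [DecidableEq n]
    {A : Matrix n n ℂ} (hA : A.PosSemidef) : hA.sqrt * hA.sqrt = A := by
  rw [hA.sqrt_eq_cfc]
  exact CFC.sqrt_mul_sqrt_self A hA.nonneg

open scoped MatrixOrder in
lemma Matrix.PosSemidef.eq_sqrt_of_sq_eq {n : Type*} [Fintype n] [DecidableEq n]
    {A : Matrix n n ℂ} (hA : A.PosSemidef) {B : Matrix n n ℂ} (hB : B.PosSemidef)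
    (h : A ^ 2 = B) : A = hB.sqrt := by
  rw [hB.sqrt_eq_cfc, eq_comm, CFC.sqrt_eq_iff _ _ hB.nonneg hA.nonneg, ← sq, h]

/-- The sandwiched matrix `ρ1^{1/2} ρ0 ρ1^{1/2}` is positive semidefinite. -/
noncomputable def sandwichPosSemidef {D : ℕ} {ρ0 ρ1 : Matrix (Fin D) (Fin D) ℂ}
    (hρ0 : ρ0.PosSemidef) (hρ1 : ρ1.PosSemidef) :
    (hρ1.sqrt * ρ0 * hρ1.sqrt).PosSemidef := by
  have h := hρ0.mul_mul_conjTranspose_same hρ1.sqrt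
  rwa [hρ1.posSemidef_sqrt.isHermitian.eq] at h

lemma polar_decomp {D : ℕ} (X : Matrix (Fin D) (Fin D) ℂ) :
    ∃ U ∈ Matrix.unitaryGroup (Fin D) ℂ,
      X = U * (Matrix.posSemidef_conjTranspose_mul_self X).sqrt := by
  have hH := Matrix.posSemidef_conjTranspose_mul_self X
  set V : Matrix (Fin D) (Fin D) ℂ := (hH.1.eigenvectorUnitary : Matrix (Fin D) (Fin D) ℂ)
    with hVdef
  set d : Fin D → ℝ := hH.1.eigenvalues with hddef
  have hdnn : ∀ i, 0 ≤ d i := fun i => hH.eigenvalues_nonneg i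
  have hVmem : V ∈ Matrix.unitaryGroup (Fin D) ℂ := hH.1.eigenvectorUnitary.2
  set Y : Matrix (Fin D) (Fin D) ℂ := X * V with hYdef
  have hYY : Yᴴ * Y = Matrix.diagonal (fun i => (d i : ℂ)) := by
    have h : star V * (Xᴴ * X) * V = diagonal (RCLike.ofReal ∘ d) := by
      have := hH.1.conjStarAlgAut_star_eigenvectorUnitary
      rwa [Unitary.conjStarAlgAut_apply, Unitary.coe_star, star_star] at this
    have : Yᴴ * Y = star V * (Xᴴ * X) * V := by
      rw [hYdef, Matrix.conjTranspose_mul, Matrix.star_eq_conjTranspose]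
      noncomm_ring
    rw [this, h]
    rfl
  have hYYe : ∀ i j, (∑ k, (starRingEnd ℂ) (Y k i) * Y k j)
      = if i = j then (d i : ℂ) else 0 := by
    intro i j
    have := congrFun (congrFun hYY i) j
    simpa [Matrix.mul_apply, Matrix.conjTranspose_apply, Matrix.diagonal] using this
  -- vectors
  set y : Fin D → EuclideanSpace ℂ (Fin D) := fun i => WithLp.toLp 2 (fun k => Y k i) with hydef
  have hyinner : ∀ i j, (inner ℂ (y i) (y j) : ℂ) = if i = j then (d i : ℂ) else 0 := by
    intro i j
    rw [← hYYe i j]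
    simp [PiLp.inner_apply, RCLike.inner_apply, hydef]
    exact Finset.sum_congr rfl fun _ _ => mul_comm _ _
  set v : Fin D → EuclideanSpace ℂ (Fin D) :=
    fun i => ((Real.sqrt (d i) : ℂ))⁻¹ • y i with hvdef
  set s : Set (Fin D) := {i | d i ≠ 0} with hsdef
  have horth : Orthonormal ℂ (s.restrict v) := by
    rw [orthonormal_iff_ite]
    intro i j
    have hij : (inner ℂ (v i) (v j) : ℂ)
        = (starRingEnd ℂ) ((Real.sqrt (d i) : ℂ))⁻¹ * ((Real.sqrt (d j) : ℂ))⁻¹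
          * (if (i : Fin D) = (j : Fin D) then (d (i : Fin D) : ℂ) else 0) := by
      rw [hvdef]
      simp only [inner_smul_left, inner_smul_right, hyinner]
      ring
    by_cases h : (i : Fin D) = (j : Fin D)
    · have : i = j := Subtype.ext h
      subst this
      simp only [Set.restrict, Set.restrict_apply, hij, if_pos rfl, if_pos]
      have hdi : d (i : Fin D) ≠ 0 := i.2
      have hsq : (Real.sqrt (d i) : ℂ) * (Real.sqrt (d i) : ℂ) = (d i : ℂ) := by
        rw [← Complex.ofReal_mul, Real.mul_self_sqrt (hdnn i)]
      have hs0 : (Real.sqrt (d i) : ℂ) ≠ 0 := by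
        simp only [ne_eq, Complex.ofReal_eq_zero]
        exact Real.sqrt_ne_zero'.mpr (lt_of_le_of_ne (hdnn i) (Ne.symm hdi))
      rw [map_inv₀, Complex.conj_ofReal]
      field_simp
      rw [sq, hsq]
    · have : i ≠ j := fun e => h (congrArg _ e)
      simp [Set.restrict, Set.restrict_apply, hij, h, this]
  obtain ⟨b, hb⟩ := horth.exists_orthonormalBasis_extension_of_card_eq
      (card_ι := (finrank_euclideanSpace (𝕜 := ℂ) (ι := Fin D)).trans (by simp))
  set B : Matrix (Fin D) (Fin D) ℂ :=
    (EuclideanSpace.basisFun (Fin D) ℂ).toBasis.toMatrix b.toBasis with hBdef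
  have hBmem : B ∈ Matrix.unitaryGroup (Fin D) ℂ :=
    (EuclideanSpace.basisFun (Fin D) ℂ).toMatrix_orthonormalBasis_mem_unitary b
  have hBapp : ∀ i j, B i j = b j i := fun i j => rfl
  -- key identity : Y = B * diagonal (√d)
  have hkey : Y = B * Matrix.diagonal (fun i => (Real.sqrt (d i) : ℂ)) := by
    ext k i
    rw [Matrix.mul_diagonal, hBapp]
    by_cases hdi : d i = 0
    · have h0 : ∀ k, Y k i = 0 := by
        have hsum := hYYe i i
        rw [if_pos rfl, hdi] at hsum
        intro k'
        have hterm : ∀ k'' : Fin D, (0:ℝ) ≤ Complex.normSq (Y k'' i) := fun _ =>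
          Complex.normSq_nonneg _
        have hsum' : ∑ k'' : Fin D, Complex.normSq (Y k'' i) = 0 := by
          have h2 : ((∑ k'' : Fin D, Complex.normSq (Y k'' i) : ℝ) : ℂ) = ((0:ℝ) : ℂ) := by
            push_cast
            simp_rw [← Complex.normSq_eq_conj_mul_self] at hsum
            rw [hsum]
            norm_num
          exact_mod_cast h2
        have := (Finset.sum_eq_zero_iff_of_nonneg (fun k'' _ => hterm k'')).mp hsum' k'
          (Finset.mem_univ k')
        exact Complex.normSq_eq_zero.mp (this)
      rw [h0 k, hdi]
      simp
    · have hmem : i ∈ s := hdi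
      have hbi : b i = v i := hb i hmem
      rw [hbi]
      have hs0 : (Real.sqrt (d i) : ℂ) ≠ 0 := by
        simp only [ne_eq, Complex.ofReal_eq_zero]
        exact Real.sqrt_ne_zero'.mpr (lt_of_le_of_ne (hdnn i) (Ne.symm hdi))
      simp only [hvdef, PiLp.smul_apply, smul_eq_mul, hydef]
      field_simp
  refine ⟨B * Vᴴ, ?_, ?_⟩
  · rw [← Matrix.star_eq_conjTranspose]
    exact mul_mem hBmem (Unitary.star_mem hVmem)
  · have hsqrt : (Matrix.posSemidef_conjTranspose_mul_self X).sqrt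
        = V * Matrix.diagonal (fun i => (Real.sqrt (d i) : ℂ)) * Vᴴ := rfl
    rw [hsqrt]
    have hVV : Vᴴ * V = 1 := by
      rw [← Matrix.star_eq_conjTranspose]
      exact Matrix.mem_unitaryGroup_iff'.mp hVmem
    have hVV' : V * Vᴴ = 1 := by
      rw [← Matrix.star_eq_conjTranspose]
      exact Matrix.mem_unitaryGroup_iff.mp hVmem
    calc X = X * (V * Vᴴ) := by rw [hVV', mul_one]
    _ = Y * Vᴴ := by rw [hYdef, Matrix.mul_assoc]
    _ = B * Matrix.diagonal (fun i => (Real.sqrt (d i) : ℂ)) * Vᴴ := by rw [hkey]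
    _ = B * Vᴴ * (V * Matrix.diagonal (fun i => (Real.sqrt (d i) : ℂ)) * Vᴴ) := by
      have h3 : B * Vᴴ * (V * Matrix.diagonal (fun i => (Real.sqrt (d i) : ℂ)) * Vᴴ)
          = B * (Vᴴ * V) * (Matrix.diagonal (fun i => (Real.sqrt (d i) : ℂ)) * Vᴴ) := by
        noncomm_ring
      rw [h3, hVV, Matrix.mul_one, ← Matrix.mul_assoc]

lemma trace_conjTranspose_mul_self_eq {D : ℕ} (M : Matrix (Fin D) (Fin D) ℂ) :
    (Mᴴ * M).trace = ((∑ p : Fin D × Fin D, Complex.normSq (M p.1 p.2) : ℝ) : ℂ) := by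
  calc (Mᴴ * M).trace = ∑ j, ∑ i, (starRingEnd ℂ) (M i j) * M i j := by
        simp [Matrix.trace, Matrix.diag_apply, Matrix.mul_apply, Matrix.conjTranspose_apply]
  _ = ∑ j, ∑ i, ((Complex.normSq (M i j) : ℂ)) := by
        simp_rw [Complex.normSq_eq_conj_mul_self]
  _ = _ := by
        push_cast
        rw [Fintype.sum_prod_type, Finset.sum_comm]

lemma abs_trace_unitary_mul_posSemidef {D : ℕ} {U P : Matrix (Fin D) (Fin D) ℂ}
    (hU : U ∈ Matrix.unitaryGroup (Fin D) ℂ) (hP : P.PosSemidef) :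
    ‖(U * P).trace‖ ≤ P.trace.re := by
  have hU' : Uᴴ * U = 1 := by
    rw [← Matrix.star_eq_conjTranspose]; exact Matrix.mem_unitaryGroup_iff'.mp hU
  set Q := hP.sqrt with hQdef
  have hQH : Qᴴ = Q := hP.posSemidef_sqrt.isHermitian.eq
  have hQQ : Q * Q = P := hP.sqrt_mul_self
  set x : EuclideanSpace ℂ (Fin D × Fin D) := WithLp.toLp 2 (fun p => (Q * Uᴴ) p.1 p.2) with hx
  set z : EuclideanSpace ℂ (Fin D × Fin D) := WithLp.toLp 2 (fun p => Q p.1 p.2) with hz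
  set A := U * Q with hA
  have hconj : ∀ p : Fin D × Fin D, (starRingEnd ℂ) ((Q * Uᴴ) p.1 p.2)
      = A p.2 p.1 := by
    intro p
    have h2 : A p.2 p.1 = ((Q * Uᴴ)ᴴ) p.2 p.1 := by
      rw [Matrix.conjTranspose_mul, Matrix.conjTranspose_conjTranspose, hQH, hA]
    rw [h2, Matrix.conjTranspose_apply, RCLike.star_def]
  have hinner : (inner ℂ x z : ℂ) = (U * P).trace := by
    have h1 : (U * P).trace = ∑ i, ∑ k, A i k * Q k i := by
      rw [← hQQ, ← Matrix.mul_assoc, ← hA]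
      simp [Matrix.trace, Matrix.diag_apply, Matrix.mul_apply]
    simp only [PiLp.inner_apply, RCLike.inner_apply, hx, hz]
    simp_rw [hconj]
    rw [h1, Fintype.sum_prod_type]
    rw [Finset.sum_comm]
    exact Finset.sum_congr rfl fun _ _ => Finset.sum_congr rfl fun _ _ => mul_comm _ _
  -- squared norms
  have hPtr : P.trace = ((∑ p : Fin D × Fin D, Complex.normSq (Q p.1 p.2) : ℝ) : ℂ) := by
    calc P.trace = (Qᴴ * Q).trace := by rw [hQH, hQQ]
    _ = _ := trace_conjTranspose_mul_self_eq Q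
  have htr : (0:ℝ) ≤ P.trace.re := by
    rw [hPtr, Complex.ofReal_re]
    exact Finset.sum_nonneg fun _ _ => Complex.normSq_nonneg _
  have hnz : ‖z‖ = Real.sqrt (P.trace.re) := by
    rw [EuclideanSpace.norm_eq]
    congr 1
    rw [hPtr, Complex.ofReal_re]
    congr 1
    ext p
    rw [← Complex.sq_norm]
  have hnx : ‖x‖ = Real.sqrt (P.trace.re) := by
    rw [EuclideanSpace.norm_eq]
    congr 1
    have h3 : ((Q * Uᴴ)ᴴ * (Q * Uᴴ)).trace = P.trace := by
      rw [Matrix.conjTranspose_mul, Matrix.conjTranspose_conjTranspose, hQH]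
      calc (U * Q * (Q * Uᴴ)).trace = (U * (Q * (Q * Uᴴ))).trace := by
            rw [Matrix.mul_assoc]
      _ = ((Q * (Q * Uᴴ)) * U).trace := Matrix.trace_mul_comm _ _
      _ = (Q * Q * (Uᴴ * U)).trace := by
            rw [← Matrix.mul_assoc Q Q Uᴴ, Matrix.mul_assoc (Q * Q) Uᴴ U]
      _ = P.trace := by rw [hU', Matrix.mul_one, hQQ]
    have h4 := trace_conjTranspose_mul_self_eq (Q * Uᴴ)
    rw [h3] at h4
    have h5 : P.trace.re = ∑ p : Fin D × Fin D, Complex.normSq ((Q * Uᴴ) p.1 p.2) := by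
      rw [h4, Complex.ofReal_re]
    rw [h5]
    congr 1
    ext p
    rw [← Complex.sq_norm]
  calc ‖(U * P).trace‖ = ‖(inner ℂ x z : ℂ)‖ := by rw [hinner]
  _ ≤ ‖x‖ * ‖z‖ := norm_inner_le_norm x z
  _ = P.trace.re := by rw [hnx, hnz, Real.mul_self_sqrt htr]

lemma expand_trace_re {D : ℕ} (W0 W1 : Matrix (Fin D) (Fin D) ℂ) :
    (((W0 - W1) * (W0 - W1)ᴴ).trace).re
      = (W0 * W0ᴴ).trace.re + (W1 * W1ᴴ).trace.re - 2 * ((W1ᴴ * W0).trace.re) := by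
  have h : (W0 - W1) * (W0 - W1)ᴴ
      = W0 * W0ᴴ + W1 * W1ᴴ - (W0 * W1ᴴ + W1 * W0ᴴ) := by
    rw [Matrix.conjTranspose_sub]
    noncomm_ring
  have hc : (W1 * W0ᴴ).trace = star ((W0 * W1ᴴ).trace) := by
    rw [← Matrix.trace_conjTranspose (W0 * W1ᴴ), Matrix.conjTranspose_mul,
      Matrix.conjTranspose_conjTranspose]
  have hm : (W0 * W1ᴴ).trace = (W1ᴴ * W0).trace := Matrix.trace_mul_comm _ _
  rw [h, Matrix.trace_sub, Matrix.trace_add, Matrix.trace_add, hc, hm]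
  simp only [Complex.sub_re, Complex.add_re, RCLike.star_def, Complex.conj_re]
  ring

lemma sqrt_congr {D : ℕ} {A B : Matrix (Fin D) (Fin D) ℂ} (h : A = B)
    (hA : A.PosSemidef) (hB : B.PosSemidef) : hA.sqrt = hB.sqrt := by
  subst h; rfl


lemma trace_sqrt_self_conj {D : ℕ} (B : Matrix (Fin D) (Fin D) ℂ) :
    (Matrix.posSemidef_self_mul_conjTranspose B).sqrt.trace
      = (Matrix.posSemidef_conjTranspose_mul_self B).sqrt.trace := by
  obtain ⟨U, hU, hpol⟩ := polar_decomp B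
  set P := (Matrix.posSemidef_conjTranspose_mul_self B).sqrt with hPdef
  have hPpsd : P.PosSemidef := (Matrix.posSemidef_conjTranspose_mul_self B).posSemidef_sqrt
  have hPH : Pᴴ = P := hPpsd.isHermitian.eq
  have hU' : Uᴴ * U = 1 := by
    rw [← Matrix.star_eq_conjTranspose]; exact Matrix.mem_unitaryGroup_iff'.mp hU
  have hA : (U * P * Uᴴ).PosSemidef := hPpsd.mul_mul_conjTranspose_same U
  have hsq : (U * P * Uᴴ) ^ 2 = B * Bᴴ := by
    rw [pow_two, hpol, Matrix.conjTranspose_mul]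
    calc U * P * Uᴴ * (U * P * Uᴴ) = U * P * (Uᴴ * U) * (P * Uᴴ) := by
          simp only [Matrix.mul_assoc]
    _ = U * P * (P * Uᴴ) := by rw [hU', Matrix.mul_one]
    _ = U * P * (Pᴴ * Uᴴ) := by rw [hPH]
  have := hA.eq_sqrt_of_sq_eq (Matrix.posSemidef_self_mul_conjTranspose B) hsq
  rw [← this]
  calc (U * P * Uᴴ).trace = ((P * Uᴴ) * U).trace := by
        rw [Matrix.mul_assoc]; exact Matrix.trace_mul_comm _ _
  _ = P.trace := by rw [Matrix.mul_assoc, hU', Matrix.mul_one]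


lemma key_bound {D : ℕ} {ρ0 ρ1 W0 W1 : Matrix (Fin D) (Fin D) ℂ}
    (hρ0 : ρ0.PosSemidef) (hρ1 : ρ1.PosSemidef)
    (hW0 : W0 * W0ᴴ = ρ0) (hW1 : W1 * W1ᴴ = ρ1) :
    ‖(W1ᴴ * W0).trace‖ ≤ ((sandwichPosSemidef hρ0 hρ1).sqrt).trace.re := by
  set X := W1ᴴ * W0 with hXdef
  obtain ⟨U, hU, hpol⟩ := polar_decomp X
  set PX := (Matrix.posSemidef_conjTranspose_mul_self X).sqrt with hPXdef
  have h1 : ‖X.trace‖ ≤ PX.trace.re := by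
    rw [hpol]
    exact abs_trace_unitary_mul_posSemidef hU
      (Matrix.posSemidef_conjTranspose_mul_self X).posSemidef_sqrt
  set B := hρ1.sqrt * W0 with hBdef
  have hs1H : hρ1.sqrtᴴ = hρ1.sqrt := hρ1.posSemidef_sqrt.isHermitian.eq
  have hBB : Bᴴ * B = Xᴴ * X := by
    rw [hBdef, hXdef, Matrix.conjTranspose_mul, Matrix.conjTranspose_mul, hs1H,
      Matrix.conjTranspose_conjTranspose]
    calc W0ᴴ * hρ1.sqrt * (hρ1.sqrt * W0) = W0ᴴ * (hρ1.sqrt * hρ1.sqrt) * W0 := by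
          simp only [Matrix.mul_assoc]
    _ = W0ᴴ * (W1 * W1ᴴ) * W0 := by rw [hρ1.sqrt_mul_self, hW1]
    _ = W0ᴴ * W1 * (W1ᴴ * W0) := by simp only [Matrix.mul_assoc]
  have hBBc : B * Bᴴ = hρ1.sqrt * ρ0 * hρ1.sqrt := by
    rw [hBdef, Matrix.conjTranspose_mul, hs1H]
    calc hρ1.sqrt * W0 * (W0ᴴ * hρ1.sqrt) = hρ1.sqrt * (W0 * W0ᴴ) * hρ1.sqrt := by
          simp only [Matrix.mul_assoc]
    _ = _ := by rw [hW0]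
  have h2 : PX.trace = ((sandwichPosSemidef hρ0 hρ1).sqrt).trace := by
    calc PX.trace = (Matrix.posSemidef_conjTranspose_mul_self B).sqrt.trace :=
          congrArg Matrix.trace (sqrt_congr hBB.symm _ _)
    _ = (Matrix.posSemidef_self_mul_conjTranspose B).sqrt.trace :=
          (trace_sqrt_self_conj B).symm
    _ = _ := congrArg Matrix.trace (sqrt_congr hBBc _ _)
  rw [← h2]
  exact h1

/-- The squared Bures distance `2 − 2F(ρ0,ρ1)` is the minimum of
`tr((W0 − W1)(W0 − W1)†)` over all `W0, W1` with `W0 W0† = ρ0` and `W1 W1† = ρ1`. -/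
theorem bures_distance_eq_min {D : ℕ} (ρ0 ρ1 : Matrix (Fin D) (Fin D) ℂ)
    (hρ0 : ρ0.PosSemidef) (hρ1 : ρ1.PosSemidef)
    (hρ0t : ρ0.trace = 1) (hρ1t : ρ1.trace = 1) :
    (∀ W0 W1 : Matrix (Fin D) (Fin D) ℂ, W0 * W0ᴴ = ρ0 → W1 * W1ᴴ = ρ1 →
        2 - 2 * ((sandwichPosSemidef hρ0 hρ1).sqrt).trace.re
          ≤ (((W0 - W1) * (W0 - W1)ᴴ).trace).re) ∧
    (∃ W0 W1 : Matrix (Fin D) (Fin D) ℂ, W0 * W0ᴴ = ρ0 ∧ W1 * W1ᴴ = ρ1 ∧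
        (((W0 - W1) * (W0 - W1)ᴴ).trace).re
          = 2 - 2 * ((sandwichPosSemidef hρ0 hρ1).sqrt).trace.re) := by
  constructor
  · intro W0 W1 hW0 hW1
    have hb := key_bound hρ0 hρ1 hW0 hW1
    have hre := Complex.re_le_norm ((W1ᴴ * W0).trace)
    rw [expand_trace_re, hW0, hW1, hρ0t, hρ1t]
    simp only [Complex.one_re]
    linarith
  · set S := (sandwichPosSemidef hρ0 hρ1).sqrt with hSdef
    have hSH : Sᴴ = S := (sandwichPosSemidef hρ0 hρ1).posSemidef_sqrt.isHermitian.eq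
    have hs0H : hρ0.sqrtᴴ = hρ0.sqrt := hρ0.posSemidef_sqrt.isHermitian.eq
    have hs1H : hρ1.sqrtᴴ = hρ1.sqrt := hρ1.posSemidef_sqrt.isHermitian.eq
    set B := hρ1.sqrt * hρ0.sqrt with hBdef
    obtain ⟨U, hU, hpol⟩ := polar_decomp Bᴴ
    have hUU : U * Uᴴ = 1 := by
      rw [← Matrix.star_eq_conjTranspose]; exact Matrix.mem_unitaryGroup_iff.mp hU
    have hU'U : Uᴴ * U = 1 := by
      rw [← Matrix.star_eq_conjTranspose]; exact Matrix.mem_unitaryGroup_iff'.mp hU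
    have hBB : (Bᴴ)ᴴ * Bᴴ = hρ1.sqrt * ρ0 * hρ1.sqrt := by
      rw [Matrix.conjTranspose_conjTranspose, hBdef, Matrix.conjTranspose_mul, hs0H, hs1H]
      calc hρ1.sqrt * hρ0.sqrt * (hρ0.sqrt * hρ1.sqrt)
          = hρ1.sqrt * (hρ0.sqrt * hρ0.sqrt) * hρ1.sqrt := by simp only [Matrix.mul_assoc]
      _ = _ := by rw [hρ0.sqrt_mul_self]
    have hsqrtS : (Matrix.posSemidef_conjTranspose_mul_self Bᴴ).sqrt = S :=
      sqrt_congr hBB _ _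
    rw [hsqrtS] at hpol
    refine ⟨hρ0.sqrt * U, hρ1.sqrt, ?_, ?_, ?_⟩
    · rw [Matrix.conjTranspose_mul, hs0H]
      calc hρ0.sqrt * U * (Uᴴ * hρ0.sqrt) = hρ0.sqrt * (U * Uᴴ) * hρ0.sqrt := by
            simp only [Matrix.mul_assoc]
      _ = ρ0 := by rw [hUU, Matrix.mul_one, hρ0.sqrt_mul_self]
    · rw [hs1H, hρ1.sqrt_mul_self]
    · have hBS : B = S * Uᴴ := by
        calc B = (Bᴴ)ᴴ := (Matrix.conjTranspose_conjTranspose B).symm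
        _ = (U * S)ᴴ := by rw [hpol]
        _ = S * Uᴴ := by rw [Matrix.conjTranspose_mul, hSH]
      have htr : (hρ1.sqrtᴴ * (hρ0.sqrt * U)).trace = S.trace := by
        rw [hs1H, ← Matrix.mul_assoc, ← hBdef, hBS, Matrix.mul_assoc, hU'U, Matrix.mul_one]
      rw [expand_trace_re, htr]
      rw [Matrix.conjTranspose_mul, hs0H]
      have m0 : hρ0.sqrt * U * (Uᴴ * hρ0.sqrt) = ρ0 := by
        calc hρ0.sqrt * U * (Uᴴ * hρ0.sqrt) = hρ0.sqrt * (U * Uᴴ) * hρ0.sqrt := by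
              simp only [Matrix.mul_assoc]
        _ = ρ0 := by rw [hUU, Matrix.mul_one, hρ0.sqrt_mul_self]
      have e0 := congrArg Matrix.trace m0
      have m1 : hρ1.sqrt * hρ1.sqrtᴴ = ρ1 := by
        rw [hs1H, hρ1.sqrt_mul_self]
      have e1 := congrArg Matrix.trace m1
      rw [e0, e1, hρ0t, hρ1t]
      simp only [Complex.one_re]
      ring
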